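/- For all real numbers p, q with p ≥ 3 and q ≥ 3, each of the three quantities 2(2cos(π/p)cos(π/q) + 1), 2(2cos(π/q) + cos(π/p)), and 2(2cos(π/p) + cos(π/q)) is at least 3, with equality if and only if p = q = 3; moreover for every real q ≥ 5 one has 4cos(π/q) ≥ 4cos(π/5) > 3. Consequently, the shortest figure eight geodesic on a triangle group orbifold with exactly one puncture has |trace| equal to 3 and length 2·arcosh(3/2) = 1.92485…, attained uniquely on the (3,3,∞)-triangle group orbifold. -/

import Mathlib

open Real

/-- The inverse hyperbolic cosine, `arcosh x = log (x + √(x² − 1))` (for `x ≥ 1`). -/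
noncomputable def arcosh (x : ℝ) : ℝ := Real.log (x + Real.sqrt (x ^ 2 - 1))

/-- The set of absolute traces of the hyperbolic elements whose axes project to figure
eight geodesics on one-punctured triangle group orbifolds `O(p,q,∞)`. -/
noncomputable def fig8TracesOnePuncture : Set ℝ :=
  {x : ℝ | ∃ q : ℤ, 5 ≤ q ∧ x = 4 * Real.cos (π / q)} ∪
    {x : ℝ | ∃ p q : ℤ, 3 ≤ p ∧ p ≤ q ∧
      (x = 2 * (2 * Real.cos (π / p) * Real.cos (π / q) + 1) ∨
        x = 2 * (2 * Real.cos (π / q) + Real.cos (π / p)) ∨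
        x = 2 * (2 * Real.cos (π / p) + Real.cos (π / q)))}

/-!
Since `x ↦ cos (π / x)` is strictly increasing on `[1, ∞)`, for `p, q ≥ 3` both cosines are at
least `cos (π / 3) = 1 / 2`, with equality only at `3`. Each trace is increasing in the two
cosines and equals `3` when both are `1 / 2`; the traces `4 cos (π / q)`, `q ≥ 5`, are at least
`4 cos (π / 5) = 1 + √5 > 3`.
-/

theorem strictMonoOn_cos_pi_div : StrictMonoOn (fun x : ℝ ↦ cos (π / x)) (Set.Ici 1) := by
  intro a (ha : 1 ≤ a) b (hb : 1 ≤ b) hab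
  apply cos_lt_cos_of_nonneg_of_le_pi (by positivity)
  · exact div_le_self pi_pos.le ha
  · exact div_lt_div_of_pos_left pi_pos (by linarith) hab

theorem cos_pi_div_le_cos_pi_div {a b : ℝ} (ha : 1 ≤ a) (hab : a ≤ b) :
    cos (π / a) ≤ cos (π / b) :=
  strictMonoOn_cos_pi_div.le_iff_le ha (Set.mem_Ici.2 (ha.trans hab)) |>.2 hab

theorem half_le_cos_pi_div {p : ℝ} (hp : 3 ≤ p) : 1 / 2 ≤ cos (π / p) :=
  cos_pi_div_three ▸ cos_pi_div_le_cos_pi_div (by norm_num) hp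

theorem cos_pi_div_eq_half_iff {p : ℝ} (hp : 3 ≤ p) : cos (π / p) = 1 / 2 ↔ p = 3 := by
  rw [← cos_pi_div_three]
  exact strictMonoOn_cos_pi_div.injOn.eq_iff (Set.mem_Ici.2 (by linarith))
    (Set.mem_Ici.2 (by norm_num))

/-- Each of the three traces exceeds `3` by at least `2 (a - 1/2) + 2 (b - 1/2)`. -/
theorem three_le_and_eq_three_iff {E a b : ℝ} (ha : 1 / 2 ≤ a) (hb : 1 / 2 ≤ b)
    (hE : 3 + 2 * (a - 1 / 2) + 2 * (b - 1 / 2) ≤ E) (hhalf : a = 1 / 2 → b = 1 / 2 → E = 3) :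
    3 ≤ E ∧ (E = 3 ↔ a = 1 / 2 ∧ b = 1 / 2) :=
  ⟨by linarith, fun _ ↦ ⟨by linarith, by linarith⟩, fun ⟨ha', hb'⟩ ↦ hhalf ha' hb'⟩

theorem fig8Traces_three_le_and_eq_three_iff (p q : ℝ) (hp : 3 ≤ p) (hq : 3 ≤ q) :
    (3 ≤ 2 * (2 * cos (π / p) * cos (π / q) + 1) ∧
        (2 * (2 * cos (π / p) * cos (π / q) + 1) = 3 ↔ p = 3 ∧ q = 3)) ∧
      (3 ≤ 2 * (2 * cos (π / q) + cos (π / p)) ∧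
        (2 * (2 * cos (π / q) + cos (π / p)) = 3 ↔ p = 3 ∧ q = 3)) ∧
      (3 ≤ 2 * (2 * cos (π / p) + cos (π / q)) ∧
        (2 * (2 * cos (π / p) + cos (π / q)) = 3 ↔ p = 3 ∧ q = 3)) := by
  have ha := half_le_cos_pi_div hp
  have hb := half_le_cos_pi_div hq
  simp only [← cos_pi_div_eq_half_iff hp, ← cos_pi_div_eq_half_iff hq]
  refine ⟨three_le_and_eq_three_iff ha hb (by nlinarith) ?_,
    three_le_and_eq_three_iff ha hb (by linarith) ?_,
    three_le_and_eq_three_iff ha hb (by linarith) ?_⟩ <;>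
  · intro ha' hb'
    rw [ha', hb']
    norm_num

theorem three_lt_four_mul_cos_pi_div_five : 3 < 4 * cos (π / 5) := by
  rw [cos_pi_div_five]
  nlinarith [sq_sqrt (show (0 : ℝ) ≤ 5 by norm_num), sqrt_nonneg 5]

theorem three_mem_fig8TracesOnePuncture : (3 : ℝ) ∈ fig8TracesOnePuncture :=
  Or.inr ⟨3, 3, le_rfl, le_rfl, Or.inl (by push_cast; rw [cos_pi_div_three]; norm_num)⟩

theorem three_mem_lowerBounds_fig8TracesOnePuncture :
    (3 : ℝ) ∈ lowerBounds fig8TracesOnePuncture := by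
  rintro x (⟨q, hq, rfl⟩ | ⟨p, q, hp, hpq, hx⟩)
  · have := cos_pi_div_le_cos_pi_div (by norm_num) (show (5 : ℝ) ≤ q by exact_mod_cast hq)
    linarith [three_lt_four_mul_cos_pi_div_five]
  · have hp' : (3 : ℝ) ≤ p := by exact_mod_cast hp
    have hq' : (3 : ℝ) ≤ q := hp'.trans (by exact_mod_cast hpq)
    obtain ⟨⟨h₁, -⟩, ⟨h₂, -⟩, ⟨h₃, -⟩⟩ := fig8Traces_three_le_and_eq_three_iff p q hp' hq'
    rcases hx with rfl | rfl | rfl <;> assumption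

theorem stmt_15 :
    (∀ p q : ℝ, 3 ≤ p → 3 ≤ q →
      (3 ≤ 2 * (2 * Real.cos (π / p) * Real.cos (π / q) + 1) ∧
        (2 * (2 * Real.cos (π / p) * Real.cos (π / q) + 1) = 3 ↔ p = 3 ∧ q = 3)) ∧
      (3 ≤ 2 * (2 * Real.cos (π / q) + Real.cos (π / p)) ∧
        (2 * (2 * Real.cos (π / q) + Real.cos (π / p)) = 3 ↔ p = 3 ∧ q = 3)) ∧
      (3 ≤ 2 * (2 * Real.cos (π / p) + Real.cos (π / q)) ∧
        (2 * (2 * Real.cos (π / p) + Real.cos (π / q)) = 3 ↔ p = 3 ∧ q = 3))) ∧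
    (∀ q : ℝ, 5 ≤ q → 4 * Real.cos (π / 5) ≤ 4 * Real.cos (π / q)) ∧
    3 < 4 * Real.cos (π / 5) ∧
    IsLeast fig8TracesOnePuncture 3 ∧
    (∀ p q : ℤ, 3 ≤ p → p ≤ q →
      ((2 * (2 * Real.cos (π / p) * Real.cos (π / q) + 1) = 3 ∨
        2 * (2 * Real.cos (π / q) + Real.cos (π / p)) = 3 ∨
        2 * (2 * Real.cos (π / p) + Real.cos (π / q)) = 3) ↔ p = 3 ∧ q = 3)) ∧
    2 * Real.cosh (2 * _root_.arcosh (3 / 2) / 2) = 3 := by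
  refine ⟨fig8Traces_three_le_and_eq_three_iff,
    fun q hq ↦ by linarith [cos_pi_div_le_cos_pi_div (by norm_num) hq],
    three_lt_four_mul_cos_pi_div_five,
    ⟨three_mem_fig8TracesOnePuncture, three_mem_lowerBounds_fig8TracesOnePuncture⟩, ?_, ?_⟩
  · intro p q hp hpq
    have hp' : (3 : ℝ) ≤ p := by exact_mod_cast hp
    have hq' : (3 : ℝ) ≤ q := hp'.trans (by exact_mod_cast hpq)
    obtain ⟨⟨-, e₁⟩, ⟨-, e₂⟩, ⟨-, e₃⟩⟩ := fig8Traces_three_le_and_eq_three_iff p q hp' hq'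
    rw [e₁, e₂, e₃, or_self, or_self]
    norm_cast
  · have h : _root_.arcosh (3 / 2) = Real.arcosh (3 / 2) := rfl
    rw [mul_div_cancel_left₀ _ two_ne_zero, h, cosh_arcosh (by norm_num)]
    norm_num
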